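/- arXiv:1911.05752 — 2 statements merged into one kernel-verified Lean document; each statement's English description precedes it below -/
import Mathlib

section
/- Let μ and ν be finite measures on a measurable space S, let g : S → ℝ be a nonnegative measurable function integrable with respect to both μ and ν, and let f : S → ℝ be a measurable function with |f(x)| ≤ M for all x ∈ S. Suppose ∫ g dμ ≥ k for some constant k > 0 and ∫ g dν > 0. Then |(∫ f·g dμ)/(∫ g dμ) − (∫ f·g dν)/(∫ g dν)| ≤ (1/k)·|∫ f·g dμ − ∫ f·g dν| + (M/k)·|∫ g dν − ∫ g dμ|. -/
/-!
Writing `A = μ(fg)`, `B = μ(g)`, `C = ν(fg)`, `D = ν(g)`, the difference of the normalized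
expectations splits as `A/B - C/D = (A - C)/B + (C/D) (D - B)/B`. The first term is controlled by
`B ≥ k`, and so is the second, since `C/D` is a weighted average of `f` and hence `|C/D| ≤ M`.
-/

open MeasureTheory

theorem abs_integral_mul_le_mul_integral {S : Type*} [MeasurableSpace S] {μ : Measure S}
    {f g : S → ℝ} {M : ℝ} (hg0 : ∀ᵐ x ∂μ, 0 ≤ g x) (hg : Integrable g μ)
    (hM : ∀ᵐ x ∂μ, |f x| ≤ M) :
    |∫ x, f x * g x ∂μ| ≤ M * ∫ x, g x ∂μ := by
  rw [← integral_const_mul]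
  refine norm_integral_le_of_norm_le (f := fun x => f x * g x) (hg.const_mul M) ?_
  filter_upwards [hg0, hM] with x hgx hfx
  rw [norm_mul, Real.norm_eq_abs, Real.norm_eq_abs, abs_of_nonneg hgx]
  exact mul_le_mul_of_nonneg_right hfx hgx

theorem div_sub_div_eq_add_mul_div (a b c d : ℝ) (hb : b ≠ 0) (hd : d ≠ 0) :
    a / b - c / d = (a - c) / b + c / d * ((d - b) / b) := by
  field_simp
  ring

theorem abs_div_sub_div_le {a b c d k M : ℝ} (hk : 0 < k) (hkb : k ≤ b) (hd : 0 < d)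
    (hcd : |c / d| ≤ M) :
    |a / b - c / d| ≤ (1 / k) * |a - c| + (M / k) * |d - b| := by
  have hb : 0 < b := hk.trans_le hkb
  rw [div_sub_div_eq_add_mul_div a b c d hb.ne' hd.ne']
  calc |(a - c) / b + c / d * ((d - b) / b)|
      ≤ |a - c| / b + |c / d| * (|d - b| / b) := by
        refine (abs_add_le _ _).trans_eq ?_
        rw [abs_mul, abs_div, abs_div (d - b), abs_of_pos hb]
    _ ≤ |a - c| / k + M * (|d - b| / k) := by
        have hM : 0 ≤ M := (abs_nonneg _).trans hcd
        gcongr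
    _ = (1 / k) * |a - c| + (M / k) * |d - b| := by ring

theorem bayes_normalization_stability_general
    {S : Type*} [MeasurableSpace S] (μ ν : Measure S)
    (g : S → ℝ) (hg0 : ∀ x, 0 ≤ g x)
    (hgν : Integrable g ν)
    (f : S → ℝ) (M : ℝ) (hM : ∀ x, |f x| ≤ M)
    (k : ℝ) (hk : 0 < k) (hkμ : k ≤ ∫ x, g x ∂μ) (hν : 0 < ∫ x, g x ∂ν) :
    |(∫ x, f x * g x ∂μ) / (∫ x, g x ∂μ) - (∫ x, f x * g x ∂ν) / (∫ x, g x ∂ν)|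
      ≤ (1 / k) * |(∫ x, f x * g x ∂μ) - (∫ x, f x * g x ∂ν)|
        + (M / k) * |(∫ x, g x ∂ν) - (∫ x, g x ∂μ)| := by
  have hfg_le : |∫ x, f x * g x ∂ν| ≤ M * ∫ x, g x ∂ν :=
    abs_integral_mul_le_mul_integral (.of_forall hg0) hgν (.of_forall hM)
  refine abs_div_sub_div_le hk hkμ hν ?_
  rwa [abs_div, abs_of_pos hν, div_le_iff₀ hν]

/-- Stability estimate for the Bayes-rule normalization. For finite measures
`μ, ν`, a nonnegative integrable likelihood `g` with `∫ g dμ ≥ k > 0` and `∫ g dν > 0`,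
and `f` measurable with `|f| ≤ M`, the normalized expectations satisfy
`|μ(fg)/μ(g) − ν(fg)/ν(g)| ≤ (1/k)|μ(fg) − ν(fg)| + (M/k)|ν(g) − μ(g)|`. -/
theorem bayes_normalization_stability
    {S : Type*} [MeasurableSpace S] (μ ν : Measure S) [IsFiniteMeasure μ] [IsFiniteMeasure ν]
    (g : S → ℝ) (hg : Measurable g) (hg0 : ∀ x, 0 ≤ g x)
    (hgμ : Integrable g μ) (hgν : Integrable g ν)
    (f : S → ℝ) (hf : Measurable f) (M : ℝ) (hM : ∀ x, |f x| ≤ M)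
    (k : ℝ) (hk : 0 < k) (hkμ : k ≤ ∫ x, g x ∂μ) (hν : 0 < ∫ x, g x ∂ν) :
    |(∫ x, f x * g x ∂μ) / (∫ x, g x ∂μ) - (∫ x, f x * g x ∂ν) / (∫ x, g x ∂ν)|
      ≤ (1 / k) * |(∫ x, f x * g x ∂μ) - (∫ x, f x * g x ∂ν)|
        + (M / k) * |(∫ x, g x ∂ν) - (∫ x, g x ∂μ)| :=
  bayes_normalization_stability_general μ ν g hg0 hgν f M hM k hk hkμ hν
end

section
/- Let (Ω, P) be a probability space, m, n ∈ ℕ, and w : Fin m → ℝ nonnegative weights with ∑ᵢ wᵢ = 1. Let I₁, …, Iₙ : Ω → Fin m be independent identically distributed random variables with P(Iₖ = i) = wᵢ for each i. Define the multinomial count ξᵢ := card{k ∈ {1,…,n} : Iₖ = i}. Then for every q : Fin m → ℝ with |qᵢ| ≤ 1 for all i, E[( ∑ᵢ qᵢ·(ξᵢ − n·wᵢ) )²] ≤ n. -/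
/-!
Writing `Y k := q (I k)`, the sum `∑ᵢ qᵢ ξᵢ` regroups as `∑ₖ Y k`, a sum of `n` independent
random variables with values in `[-1, 1]`, each of mean `∑ᵢ qᵢ wᵢ`. The quantity to bound is
therefore the variance of `∑ₖ Y k`, which is the sum of the variances, each at most `1` by
Popoviciu's inequality.
-/

open MeasureTheory ProbabilityTheory Finset

theorem Finset.sum_mul_card_filter_eq_sum_comp {ι κ R : Type*} [Fintype κ] [DecidableEq κ]
    [NonAssocSemiring R] (s : Finset ι) (f : ι → κ) (q : κ → R) :
    ∑ j, q j * #{i ∈ s | f i = j} = ∑ i ∈ s, q (f i) := by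
  rw [← sum_fiberwise s f (fun i => q (f i))]
  refine sum_congr rfl fun j _ => ?_
  rw [sum_congr rfl fun i hi => congrArg q (mem_filter.1 hi).2, sum_const, nsmul_eq_mul']

section

variable {Ω : Type*} [MeasurableSpace Ω] {P : Measure Ω}

theorem integral_comp_eq_sum_mul_measureReal {α : Type*} [Fintype α] [MeasurableSpace α]
    [MeasurableSingletonClass α] [IsFiniteMeasure P] {X : Ω → α} (hX : Measurable X)
    (q : α → ℝ) :
    ∫ ω, q (X ω) ∂P = ∑ i, q i * P.real {ω | X ω = i} := by
  rw [← integral_map hX.aemeasurable (measurable_of_finite q).aestronglyMeasurable,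
    integral_fintype Integrable.of_finite]
  simp only [map_measureReal_apply hX (measurableSet_singleton _), smul_eq_mul, mul_comm]
  rfl

theorem ProbabilityTheory.iIndepFun.variance_sum_le_card [IsProbabilityMeasure P] {ι : Type*}
    [Fintype ι] {X : ι → Ω → ℝ} (hindep : iIndepFun X P) (hX : ∀ i, AEMeasurable (X i) P)
    (hbound : ∀ i, ∀ᵐ ω ∂P, |X i ω| ≤ 1) :
    Var[∑ i, X i; P] ≤ Fintype.card ι := by
  have hIcc : ∀ i, ∀ᵐ ω ∂P, X i ω ∈ Set.Icc (-1) 1 := fun i =>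
    (hbound i).mono fun ω h => abs_le.1 h
  rw [IndepFun.variance_sum (fun i _ => memLp_of_bounded (hIcc i) (hX i).aestronglyMeasurable 2)
    fun i _ j _ hij => hindep.indepFun hij]
  calc ∑ i, Var[X i; P] ≤ ∑ _i : ι, (1 : ℝ) := sum_le_sum fun i _ => by
        simpa using variance_le_sq_of_bounded (hIcc i) (hX i)
    _ = Fintype.card ι := by simp

end

theorem multinomial_quadratic_form_bound_general
    {Ω : Type*} [MeasurableSpace Ω] (P : Measure Ω) [IsProbabilityMeasure P]
    (m n : ℕ) (w : Fin m → ℝ) (hw0 : ∀ i, 0 ≤ w i)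
    (I : Fin n → Ω → Fin m)
    (hImeas : ∀ k, Measurable (I k))
    (hindep : iIndepFun I P)
    (hdist : ∀ k i, P {ω | I k ω = i} = ENNReal.ofReal (w i)) :
    ∀ q : Fin m → ℝ, (∀ i, |q i| ≤ 1) →
      ∫ ω, (∑ i, q i * (((univ.filter fun k : Fin n => I k ω = i).card : ℝ) - n * w i)) ^ 2 ∂P
        ≤ n := by
  intro q hq
  set Y : Fin n → Ω → ℝ := fun k => q ∘ I k
  have hY : ∀ k, Measurable (Y k) := fun k => (measurable_of_finite q).comp (hImeas k)
  have hmean : ∫ ω, ∑ k, Y k ω ∂P = n * ∑ i, q i * w i := by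
    rw [integral_finsetSum _ fun k _ =>
      Integrable.of_bound (hY k).aestronglyMeasurable 1 (ae_of_all _ fun ω => hq _)]
    simp [Y, integral_comp_eq_sum_mul_measureReal (hImeas _), measureReal_def, hdist, hw0]
  have hcentered : ∀ ω,
      ∑ i, q i * (((univ.filter fun k : Fin n => I k ω = i).card : ℝ) - n * w i)
        = ∑ k, Y k ω - n * ∑ i, q i * w i := fun ω => by
    simp only [mul_sub, sum_sub_distrib, sum_mul_card_filter_eq_sum_comp, mul_sum]
    simp [Y, mul_left_comm]
  calc _ = Var[∑ k, Y k; P] := by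
        rw [variance_eq_integral (by fun_prop)]
        simp [hcentered, hmean]
    _ ≤ n := by
        simpa using (hindep.comp _ fun _ => measurable_of_finite q).variance_sum_le_card
          (fun k => (hY k).aemeasurable) fun k => ae_of_all _ fun ω => hq _

/-- Multinomial branching satisfies the quadratic-form bound with constant
`c = 1`: for any `q` with `|qᵢ| ≤ 1`, `E[(∑ᵢ qᵢ (ξᵢ − n wᵢ))²] ≤ n`. -/
theorem multinomial_quadratic_form_bound
    {Ω : Type*} [MeasurableSpace Ω] (P : Measure Ω) [IsProbabilityMeasure P]
    (m n : ℕ) (w : Fin m → ℝ) (hw0 : ∀ i, 0 ≤ w i) (hw1 : ∑ i, w i = 1)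
    (I : Fin n → Ω → Fin m)
    (hImeas : ∀ k, Measurable (I k))
    (hindep : iIndepFun I P)
    (hdist : ∀ k i, P {ω | I k ω = i} = ENNReal.ofReal (w i)) :
    ∀ q : Fin m → ℝ, (∀ i, |q i| ≤ 1) →
      ∫ ω, (∑ i, q i * (((univ.filter fun k : Fin n => I k ω = i).card : ℝ) - n * w i)) ^ 2 ∂P
        ≤ n :=
  multinomial_quadratic_form_bound_general P m n w hw0 I hImeas hindep hdist
end
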